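/- Let q ≥ 1 be an integer, λ ≥ 1/2 with 2λq an integer, and x, x' elements of the quantized set {0, 1/q, ..., 1}. Let s be uniformly distributed on the set {1/(2q), 3/(2q), ..., (4λq-1)/(2q)} (i.e., s = k/q + 1/(2q) for k = 0,...,2λq-1). Define t(x,s) = (min(s,1) + 1_{x > s})/2. Then P(t(x,s) ≠ t(x',s)) = |x - x'|/(2λ). -/

import Mathlib

open MeasureTheory Set

/-- Discrete uniform probability measure on `{k/q + 1/(2q) : 0 ≤ k ≤ m-1}`. -/
noncomputable def discUnif (q m : ℕ) : Measure ℝ :=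
  (m : ENNReal)⁻¹ • ∑ k ∈ Finset.range m, Measure.dirac ((k : ℝ) / q + 1 / (2 * q))

/-- The splitting map `t(x,s) = (min(s,1) + 1_{x > s})/2`. -/
noncomputable def splitVal (x s : ℝ) : ℝ := (min s 1 + (if s < x then (1:ℝ) else 0)) / 2

/- The disagreement set `{s | t(x,s) ≠ t(x',s)}` is the interval `[min x x', max x x')`, and a
uniform half-step `s` falls into `[j/q, j'/q)` for exactly `j' - j` of the `m = 2λq` values. -/

theorem setOf_splitVal_ne_eq_Ico (x x' : ℝ) :
    {s : ℝ | splitVal x s ≠ splitVal x' s} = Ico (min x x') (max x x') := by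
  ext s
  by_cases hx : s < x <;> by_cases hx' : s < x' <;>
    simp [splitVal, hx, hx', not_lt.1]

theorem discUnif_apply (q m : ℕ) (S : Set ℝ) [DecidablePred (· ∈ S)] :
    discUnif q m S =
      ((Finset.range m).filter (fun k : ℕ => (k : ℝ) / q + 1 / (2 * q) ∈ S)).card / m := by
  simp [discUnif, Measure.dirac_apply, Set.indicator_apply, ENNReal.div_eq_inv_mul]

theorem natCast_div_add_half_lt_natCast_div_iff {q : ℕ} (hq : 0 < q) (k j : ℕ) :
    (k : ℝ) / q + 1 / (2 * q) < (j : ℝ) / q ↔ k < j := by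
  have h2q : (0 : ℝ) < 2 * q := by positivity
  rw [show (k : ℝ) / q + 1 / (2 * q) = ((2 * k + 1 : ℕ) : ℝ) / (2 * q) by push_cast; field_simp,
    show (j : ℝ) / q = ((2 * j : ℕ) : ℝ) / (2 * q) by push_cast; field_simp,
    div_lt_div_iff_of_pos_right h2q, Nat.cast_lt]
  omega

theorem discUnif_Ico_natCast_div {q m : ℕ} (hq : 0 < q) {j j' : ℕ} (hj' : j' ≤ m) :
    discUnif q m (Ico ((j : ℝ) / q) ((j' : ℝ) / q)) = ((j' - j : ℕ) : ENNReal) / m := by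
  have hmem (k : ℕ) : (k : ℝ) / q + 1 / (2 * q) ∈ Ico ((j : ℝ) / q) ((j' : ℝ) / q) ↔
      j ≤ k ∧ k < j' := by
    simp only [mem_Ico, ← not_lt, natCast_div_add_half_lt_natCast_div_iff hq]
  have hfilter : (Finset.range m).filter
      (fun k : ℕ => (k : ℝ) / q + 1 / (2 * q) ∈ Ico ((j : ℝ) / q) ((j' : ℝ) / q)) =
        Finset.Ico j j' := by
    ext k
    simp only [Finset.mem_filter, Finset.mem_range, hmem, Finset.mem_Ico]
    exact and_iff_right_of_imp fun hk => hk.2.trans_le hj'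
  rw [discUnif_apply, hfilter, Nat.card_Ico]

/-- Quantized case: with `s` uniform on the half-steps `{k/q + 1/(2q) : k < 2λq}` and
`x, x'` multiples of `1/q` in `[0,1]`, the probability that the splitting representations
differ is exactly `|x - x'| / (2λ)`. -/
theorem quantized_splitting_disagreement_probability
    (q : ℕ) (hq : 1 ≤ q) (lam : ℝ) (hlam : 1/2 ≤ lam)
    (m : ℕ) (hm : (m : ℝ) = 2 * lam * q)
    (x x' : ℝ) (hx : ∃ k : ℕ, k ≤ q ∧ x = (k : ℝ) / q)
    (hx' : ∃ k : ℕ, k ≤ q ∧ x' = (k : ℝ) / q) :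
    discUnif q m {s : ℝ | splitVal x s ≠ splitVal x' s} =
      ENNReal.ofReal (|x - x'| / (2 * lam)) := by
  obtain ⟨j, hj, rfl⟩ := hx
  obtain ⟨j', hj', rfl⟩ := hx'
  have hq₀ : (0 : ℝ) < q := by exact_mod_cast hq
  have hqm : q ≤ m := by exact_mod_cast (show (q : ℝ) ≤ m by rw [hm]; nlinarith)
  have hm₀ : (0 : ℝ) < m := by rw [hm]; positivity
  have hdist : |(j : ℝ) / q - j' / q| / (2 * lam) = ((max j j' - min j j' : ℕ) : ℝ) / m := by
    rw [← sub_div, abs_div, abs_of_pos hq₀, div_div, mul_comm (q : ℝ), ← hm,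
      Nat.cast_sub min_le_max, Nat.cast_max, Nat.cast_min, max_sub_min_eq_abs, abs_sub_comm]
  rw [setOf_splitVal_ne_eq_Ico, min_div_div_right hq₀.le, max_div_div_right hq₀.le,
    ← Nat.cast_min, ← Nat.cast_max, discUnif_Ico_natCast_div hq (max_le hj hj' |>.trans hqm),
    hdist, ENNReal.ofReal_div_of_pos hm₀, ENNReal.ofReal_natCast, ENNReal.ofReal_natCast]
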